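/- Let α, β, γ be real numbers with α > -1/2, α + β + γ > -3/2, γ > −1/2, and let θ > 0. Define G(T) = e^{−2θT} ∫₀ᵀ s^{2α} (∫ₛᵀ e^{θt} t^β (t−s)^γ dt)² ds for T > 0. Then lim_{T→+∞} G(T) / T^{2α+2β+2γ+1} = ς² / θ², where ς² = Γ(2α+1)Γ(2γ+1) / Γ(2α+2γ+2). -/

import Mathlib

/-!
Substituting `s = T u` and `t = T - x` gives `G(T) / T^(2α+2β+2γ+1) = ∫₀¹ u^(2α) Φ_T(u)² du` with
`Φ_T(u) = ∫₀^{T(1-u)} e^{-θx} (1 - x/T)^β (1 - u - x/T)^γ dx`. On `x ≤ T(1-u)/2` the integrand is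
bounded by a multiple of `(1-u)^γ e^{-θx}` and converges to `(1-u)^γ e^{-θx}`, so this part of
`Φ_T(u)` tends to `(1-u)^γ / θ`; on the other half `e^{-θx} ≤ e^{-θT(1-u)/2}`, which kills an
integral independent of `T`. The same splitting bounds `Φ_T(u)` by `C (u^(-ε) + (1-u)^γ)` uniformly
in `T`, where `ε ≥ 0` is chosen with `β + γ + ε > -1` and `2α - 2ε > -1`; this bound is square
integrable against `u^(2α)`. Dominated convergence and the Beta integral
`∫₀¹ u^(2α) (1-u)^(2γ) du = Γ(2α+1) Γ(2γ+1) / Γ(2α+2γ+2)` conclude.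
-/

open MeasureTheory Filter Set Topology

theorem Real.rpow_le_rpow_add_rpow_of_mem_Icc {a b x : ℝ} (p : ℝ) (ha : 0 < a)
    (hax : a ≤ x) (hxb : x ≤ b) : x ^ p ≤ a ^ p + b ^ p := by
  rcases le_or_gt 0 p with hp | hp
  · linarith [Real.rpow_le_rpow (ha.le.trans hax) hxb hp, Real.rpow_nonneg ha.le p]
  · linarith [Real.rpow_le_rpow_of_nonpos ha hax hp.le,
      Real.rpow_nonneg (ha.le.trans (hax.trans hxb)) p]

theorem Real.rpow_pow_two_eq_rpow_two_mul {x : ℝ} (hx : 0 ≤ x) (y : ℝ) :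
    (x ^ y) ^ 2 = x ^ (2 * y) := by
  rw [← Real.rpow_two, ← Real.rpow_mul hx, mul_comm]

theorem Real.mul_exp_neg_mul_le {c : ℝ} (hc : 0 < c) (x : ℝ) : x * Real.exp (-c * x) ≤ 1 / c := by
  rw [le_div_iff₀ hc, mul_comm _ c, ← mul_assoc, neg_mul]
  exact (Real.mul_exp_neg_le_exp_neg_one _).trans (by simp)

theorem integral_exp_neg_mul_Ioi {θ : ℝ} (hθ : 0 < θ) :
    ∫ x in Ioi (0:ℝ), Real.exp (-θ * x) = 1 / θ := by
  rw [integral_exp_mul_Ioi (neg_neg_of_pos hθ), mul_zero, Real.exp_zero]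
  ring

theorem integral_exp_neg_mul_le {θ b : ℝ} (hθ : 0 < θ) (hb : 0 ≤ b) :
    ∫ x in (0:ℝ)..b, Real.exp (-θ * x) ≤ 1 / θ := by
  rw [intervalIntegral.integral_of_le hb, ← integral_exp_neg_mul_Ioi hθ]
  exact setIntegral_mono_set (integrableOn_exp_mul_Ioi (neg_neg_of_pos hθ) 0)
    (ae_of_all _ fun x => (Real.exp_pos _).le) Ioc_subset_Ioi_self.eventuallyLE

theorem intervalIntegrable_sub_rpow {γ : ℝ} (hγ : -1 < γ) (c a b : ℝ) :
    IntervalIntegrable (fun y => (c - y) ^ γ) volume a b := by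
  simpa using
    (intervalIntegral.intervalIntegrable_rpow' hγ (a := c - a) (b := c - b)).comp_sub_left c

theorem integral_sub_rpow {γ : ℝ} (hγ : -1 < γ) (c a b : ℝ) :
    ∫ y in a..b, (c - y) ^ γ = ((c - a) ^ (γ + 1) - (c - b) ^ (γ + 1)) / (γ + 1) := by
  rw [intervalIntegral.integral_comp_sub_left (fun y => y ^ γ), integral_rpow (Or.inl hγ)]

theorem integral_sub_rpow_half {p : ℝ} (hp : -1 < p) (c : ℝ) :
    ∫ y in c / 2..c, (c - y) ^ p = (c / 2) ^ (p + 1) / (p + 1) := by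
  rw [integral_sub_rpow hp, sub_self, Real.zero_rpow (by linarith), sub_zero, sub_half]

theorem intervalIntegrable_rpow_mul_one_sub_rpow {p q : ℝ} (hp : -1 < p) (hq : -1 < q) :
    IntervalIntegrable (fun u : ℝ => u ^ p * (1 - u) ^ q) volume 0 1 := by
  refine IntervalIntegrable.trans (b := 1 / 2) ?_ ?_
  · refine (intervalIntegral.intervalIntegrable_rpow' hp).mul_continuousOn
      ((continuous_sub_left 1).continuousOn.rpow_const fun x hx => Or.inl ?_)
    rw [uIcc_of_le (by norm_num)] at hx
    exact sub_ne_zero.2 (by linarith [hx.2])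
  · refine (intervalIntegrable_sub_rpow hq 1 _ _).continuousOn_mul
      (continuousOn_id.rpow_const fun x hx => Or.inl ?_)
    rw [uIcc_of_le (by norm_num)] at hx
    exact (lt_of_lt_of_le (by norm_num) hx.1).ne'

theorem integral_rpow_mul_one_sub_rpow {a b : ℝ} (ha : 0 < a) (hb : 0 < b) :
    ∫ u in (0:ℝ)..1, u ^ (a - 1) * (1 - u) ^ (b - 1) =
      Real.Gamma a * Real.Gamma b / Real.Gamma (a + b) := by
  have key := Complex.Gamma_mul_Gamma_eq_betaIntegral (s := a) (t := b)
    (by simpa using ha) (by simpa using hb)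
  have hbeta : Complex.betaIntegral a b
      = ((∫ u in (0:ℝ)..1, u ^ (a - 1) * (1 - u) ^ (b - 1) : ℝ) : ℂ) := by
    rw [Complex.betaIntegral, ← intervalIntegral.integral_ofReal]
    refine intervalIntegral.integral_congr fun x hx => ?_
    rw [uIcc_of_le zero_le_one] at hx
    simp only [Complex.ofReal_mul]
    rw [Complex.ofReal_cpow hx.1, Complex.ofReal_cpow (by linarith [hx.2])]
    push_cast
    ring
  rw [hbeta, ← Complex.ofReal_add, Complex.Gamma_ofReal, Complex.Gamma_ofReal,
    Complex.Gamma_ofReal, ← Complex.ofReal_mul, ← Complex.ofReal_mul] at key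
  rw [eq_div_iff (Real.Gamma_pos_of_pos (add_pos ha hb)).ne', mul_comm]
  exact_mod_cast key.symm

theorem tendsto_intervalIntegral_of_dominated_of_tendsto_atTop {E : Type*}
    [NormedAddCommGroup E] [NormedSpace ℝ E] {ι : Type*} {l : Filter ι}
    [l.IsCountablyGenerated] {F : ι → ℝ → E} {f : ℝ → E} {bound : ℝ → ℝ} {a : ι → ℝ} (c : ℝ)
    (ha : Tendsto a l atTop)
    (hF_meas : ∀ᶠ i in l, AEStronglyMeasurable (F i) (volume.restrict (Ioi c)))
    (h_bound : ∀ᶠ i in l, ∀ x ∈ Ioc c (a i), ‖F i x‖ ≤ bound x)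
    (bound_integrable : IntegrableOn bound (Ioi c))
    (h_lim : ∀ x ∈ Ioi c, Tendsto (fun i => F i x) l (𝓝 (f x))) :
    Tendsto (fun i => ∫ x in c..a i, F i x) l (𝓝 (∫ x in Ioi c, f x)) := by
  have h := MeasureTheory.tendsto_integral_filter_of_dominated_convergence (fun x => ‖bound x‖)
    (F := fun i => (Ioc c (a i)).indicator (F i)) (f := f)
    (hF_meas.mono fun i hi => hi.indicator measurableSet_Ioc)
    (h_bound.mono fun i hi => ae_of_all _ fun x => by
      by_cases hx : x ∈ Ioc c (a i)
      · simpa [indicator_of_mem hx] using (hi x hx).trans (Real.le_norm_self _)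
      · simp [indicator_of_notMem hx])
    bound_integrable.norm
    ((ae_restrict_mem measurableSet_Ioi).mono fun x (hx : c < x) =>
      (h_lim x hx).congr' ((ha.eventually_ge_atTop x).mono fun i hi =>
        (indicator_of_mem (show x ∈ Ioc c (a i) from ⟨hx, hi⟩) _).symm))
  refine h.congr' ((ha.eventually_ge_atTop c).mono fun i (hi : c ≤ a i) => ?_)
  show _ = ∫ x in c..a i, F i x
  rw [intervalIntegral.integral_of_le hi, integral_indicator measurableSet_Ioc,
    Measure.restrict_restrict measurableSet_Ioc, inter_eq_self_of_subset_left Ioc_subset_Ioi_self]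

theorem MeasureTheory.StronglyMeasurable.setIntegral_Ioc_prod_right {E : Type*}
    [NormedAddCommGroup E] [NormedSpace ℝ E] {f : ℝ → ℝ → E}
    (hf : StronglyMeasurable (Function.uncurry f))
    {a b : ℝ → ℝ} (ha : Measurable a) (hb : Measurable b) :
    StronglyMeasurable fun u => ∫ x in Ioc (a u) (b u), f u x := by
  have hs : MeasurableSet {p : ℝ × ℝ | a p.1 < p.2 ∧ p.2 ≤ b p.1} :=
    (_root_.measurableSet_lt (ha.comp measurable_fst) measurable_snd).inter
      (_root_.measurableSet_le measurable_snd (hb.comp measurable_fst))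
  convert (hf.indicator hs).integral_prod_right' (ν := volume) using 1
  funext u
  rw [← integral_indicator measurableSet_Ioc]
  rfl

theorem MeasureTheory.StronglyMeasurable.intervalIntegral_prod_right {E : Type*}
    [NormedAddCommGroup E] [NormedSpace ℝ E] {f : ℝ → ℝ → E}
    (hf : StronglyMeasurable (Function.uncurry f))
    {a b : ℝ → ℝ} (ha : Measurable a) (hb : Measurable b) :
    StronglyMeasurable fun u => ∫ x in a u..b u, f u x :=
  (hf.setIntegral_Ioc_prod_right ha hb).sub (hf.setIntegral_Ioc_prod_right hb ha)

noncomputable def weight (β γ u y : ℝ) : ℝ := (1 - y) ^ β * (1 - u - y) ^ γ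

noncomputable def kernel (β γ θ T u x : ℝ) : ℝ := Real.exp (-θ * x) * weight β γ u (x / T)

noncomputable def scaledInner (β γ θ T u : ℝ) : ℝ :=
  ∫ x in (0:ℝ)..T * (1 - u), kernel β γ θ T u x

noncomputable def tailProfile (β γ u : ℝ) : ℝ :=
  ∫ y in (1 - u) / 2..1 - u, weight β γ u y

section

variable {β γ θ T u : ℝ}

theorem weight_nonneg (hu : 0 ≤ u) {y : ℝ} (hy : y ≤ 1 - u) : 0 ≤ weight β γ u y :=
  mul_nonneg (Real.rpow_nonneg (by linarith) _) (Real.rpow_nonneg (by linarith) _)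

theorem intervalIntegrable_weight (hγ : -1 < γ) (hu : 0 < u) {a b : ℝ} (ha : a ≤ 1 - u)
    (hb : b ≤ 1 - u) : IntervalIntegrable (weight β γ u) volume a b := by
  refine IntervalIntegrable.continuousOn_mul (intervalIntegrable_sub_rpow hγ _ a b) ?_
  refine (continuous_sub_left (1:ℝ)).continuousOn.rpow_const fun y hy => Or.inl ?_
  have : y ≤ 1 - u := (max_le ha hb).trans' hy.2
  exact sub_ne_zero.2 (by linarith)

theorem intervalIntegrable_weight_div (hγ : -1 < γ) (hT : 0 < T) (hu : 0 < u) {a b : ℝ}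
    (ha : a ≤ T * (1 - u)) (hb : b ≤ T * (1 - u)) :
    IntervalIntegrable (fun x => weight β γ u (x / T)) volume a b := by
  have h := (intervalIntegrable_weight (β := β) hγ hu (a := a / T) (b := b / T)
    (by rwa [div_le_iff₀ hT, mul_comm]) (by rwa [div_le_iff₀ hT, mul_comm])).comp_mul_left
    (c := T⁻¹)
  simp only [div_inv_eq_mul, div_mul_cancel₀ _ hT.ne'] at h
  simpa [div_eq_inv_mul] using h

theorem intervalIntegrable_kernel (hγ : -1 < γ) (hT : 0 < T) (hu : 0 < u) {a b : ℝ}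
    (ha : a ≤ T * (1 - u)) (hb : b ≤ T * (1 - u)) :
    IntervalIntegrable (kernel β γ θ T u) volume a b :=
  (intervalIntegrable_weight_div hγ hT hu ha hb).continuousOn_mul (by fun_prop)

theorem kernel_nonneg (hT : 0 < T) (hu : 0 ≤ u) {x : ℝ} (hx : x ≤ T * (1 - u)) :
    0 ≤ kernel β γ θ T u x :=
  mul_nonneg (Real.exp_pos _).le (weight_nonneg hu (by rwa [div_le_iff₀ hT, mul_comm]))

theorem weight_le_of_le_half (hu0 : 0 ≤ u) (hu1 : u < 1) {y : ℝ} (hy0 : 0 ≤ y)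
    (hy : y ≤ (1 - u) / 2) :
    weight β γ u y ≤ ((1 / 2) ^ β + 1) * ((1 / 2) ^ γ + 1) * (1 - u) ^ γ := by
  have h1 : (1 - y) ^ β ≤ (1 / 2) ^ β + 1 := by
    simpa using Real.rpow_le_rpow_add_rpow_of_mem_Icc β (a := 1/2) (b := 1) (x := 1 - y)
      (by norm_num) (by linarith) (by linarith)
  have h2 : (1 - u - y) ^ γ ≤ ((1 / 2) ^ γ + 1) * (1 - u) ^ γ := by
    have := Real.rpow_le_rpow_add_rpow_of_mem_Icc γ (a := (1 - u) / 2) (b := 1 - u)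
      (x := 1 - u - y) (by linarith) (by linarith) (by linarith)
    rw [div_eq_mul_one_div, Real.mul_rpow (by linarith) (by norm_num)] at this
    linarith
  rw [weight, mul_assoc]
  exact mul_le_mul h1 h2 (Real.rpow_nonneg (by linarith) _) (by positivity)

theorem kernel_le_of_le_half (hT : 0 < T) (hu0 : 0 ≤ u) (hu1 : u < 1) {x : ℝ} (hx0 : 0 ≤ x)
    (hx : x ≤ T * (1 - u) / 2) :
    kernel β γ θ T u x ≤
      ((1 / 2) ^ β + 1) * ((1 / 2) ^ γ + 1) * (1 - u) ^ γ * Real.exp (-θ * x) := by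
  rw [kernel, mul_comm]
  refine mul_le_mul_of_nonneg_right
    (weight_le_of_le_half hu0 hu1 (div_nonneg hx0 hT.le) ?_) (Real.exp_pos _).le
  rw [div_le_iff₀ hT]
  linarith

theorem tendsto_integral_kernel_half (hθ : 0 < θ) (hu0 : 0 < u) (hu1 : u < 1) :
    Tendsto (fun T => ∫ x in (0:ℝ)..T * (1 - u) / 2, kernel β γ θ T u x)
      atTop (𝓝 ((1 - u) ^ γ / θ)) := by
  have hw : ContinuousAt (weight β γ u) 0 :=
    ((continuous_sub_left 1).continuousAt.rpow_const (Or.inl (by norm_num))).mul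
      ((continuous_sub_left (1 - u)).continuousAt.rpow_const (Or.inl (by simp; linarith)))
  have hlim := tendsto_intervalIntegral_of_dominated_of_tendsto_atTop 0
    (a := fun T => T * (1 - u) / 2) (F := fun T => kernel β γ θ T u)
    (f := fun x => Real.exp (-θ * x) * (1 - u) ^ γ)
    (bound := fun x => ((1 / 2) ^ β + 1) * ((1 / 2) ^ γ + 1) * (1 - u) ^ γ * Real.exp (-θ * x))
    ((tendsto_id.atTop_mul_const (by linarith)).atTop_div_const two_pos)
    (Eventually.of_forall fun T =>
      (by unfold kernel weight; fun_prop : Measurable _).aestronglyMeasurable)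
    ((eventually_gt_atTop 0).mono fun T hT x hx => by
      have := mul_pos hT (sub_pos.2 hu1)
      rw [Real.norm_of_nonneg (kernel_nonneg hT hu0.le (by linarith [hx.2]))]
      exact kernel_le_of_le_half hT hu0.le hu1 hx.1.le hx.2)
    ((integrableOn_exp_mul_Ioi (neg_neg_of_pos hθ) 0).const_mul _)
    (fun x _ => tendsto_const_nhds.mul (by
      simpa [weight, Function.comp_def] using
        hw.tendsto.comp (tendsto_const_nhds.div_atTop tendsto_id)))
  rwa [integral_mul_const, integral_exp_neg_mul_Ioi hθ, one_div_mul_eq_div] at hlim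

theorem integral_kernel_half_le (hγ : -1 < γ) (hθ : 0 < θ) (hT : 0 < T) (hu0 : 0 < u)
    (hu1 : u < 1) :
    ∫ x in (0:ℝ)..T * (1 - u) / 2, kernel β γ θ T u x ≤
      ((1 / 2) ^ β + 1) * ((1 / 2) ^ γ + 1) * (1 - u) ^ γ / θ := by
  have hL : 0 ≤ T * (1 - u) / 2 := by have := mul_pos hT (sub_pos.2 hu1); positivity
  set c := ((1 / 2 : ℝ) ^ β + 1) * ((1 / 2) ^ γ + 1) * (1 - u) ^ γ
  have hc : 0 ≤ c := mul_nonneg (by positivity) (Real.rpow_nonneg (by linarith) _)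
  calc _ ≤ ∫ x in (0:ℝ)..T * (1 - u) / 2, c * Real.exp (-θ * x) :=
        intervalIntegral.integral_mono_on hL
          (intervalIntegrable_kernel hγ hT hu0 (by linarith) (by linarith))
          (Continuous.intervalIntegrable (by fun_prop) _ _)
          fun x hx => kernel_le_of_le_half hT hu0.le hu1 hx.1 hx.2
    _ ≤ c / θ := by
        rw [intervalIntegral.integral_const_mul]
        exact (mul_le_mul_of_nonneg_left (integral_exp_neg_mul_le hθ hL) hc).trans_eq
          (mul_one_div c θ)

theorem integral_kernel_tail_le (hγ : -1 < γ) (hθ : 0 ≤ θ) (hT : 0 < T) (hu0 : 0 < u)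
    (hu1 : u < 1) :
    ∫ x in T * (1 - u) / 2..T * (1 - u), kernel β γ θ T u x ≤
      T * Real.exp (-(θ * (1 - u) / 2) * T) * tailProfile β γ u := by
  have hL : 0 ≤ T * (1 - u) := (mul_pos hT (sub_pos.2 hu1)).le
  have hw := intervalIntegrable_weight_div (β := β) hγ hT hu0 (a := T * (1 - u) / 2)
    (b := T * (1 - u)) (by linarith) le_rfl
  calc _ ≤ ∫ x in T * (1 - u) / 2..T * (1 - u),
        Real.exp (-θ * (T * (1 - u) / 2)) * weight β γ u (x / T) := by
        refine intervalIntegral.integral_mono_on (by linarith)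
          (intervalIntegrable_kernel hγ hT hu0 (by linarith) le_rfl) (hw.const_mul _)
          fun x hx => ?_
        have hxT : x / T ≤ 1 - u := by rw [div_le_iff₀ hT]; linarith [hx.2]
        exact mul_le_mul_of_nonneg_right (Real.exp_le_exp.2 (by nlinarith [hx.1]))
          (weight_nonneg hu0.le hxT)
    _ = _ := by
        rw [intervalIntegral.integral_const_mul, intervalIntegral.integral_comp_div _ hT.ne',
          smul_eq_mul, tailProfile, mul_div_cancel_left₀ _ hT.ne',
          show T * (1 - u) / 2 / T = (1 - u) / 2 by field_simp]
        ring_nf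

theorem tailProfile_le_rpow_one_sub (hγ : -1 < γ) (hu0 : 0 < u) (hu1 : u < 1) :
    tailProfile β γ u ≤ (u ^ β + 1) * ((1 - u) / 2) ^ (γ + 1) / (γ + 1) := by
  calc tailProfile β γ u ≤ ∫ y in (1 - u) / 2..1 - u, (u ^ β + 1) * (1 - u - y) ^ γ := by
        refine intervalIntegral.integral_mono_on (by linarith)
          (intervalIntegrable_weight hγ hu0 (by linarith) le_rfl)
          ((intervalIntegrable_sub_rpow hγ _ _ _).const_mul _) fun y hy => ?_
        have h := Real.rpow_le_rpow_add_rpow_of_mem_Icc β hu0 (x := 1 - y) (b := 1)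
          (by linarith [hy.2]) (by linarith [hy.1])
        rw [Real.one_rpow] at h
        exact mul_le_mul_of_nonneg_right h (Real.rpow_nonneg (by linarith [hy.2]) _)
    _ = _ := by rw [intervalIntegral.integral_const_mul, integral_sub_rpow_half hγ, mul_div_assoc]

theorem tailProfile_le_rpow_neg {ε : ℝ} (hγ : -1 < γ) (hε : 0 ≤ ε) (hβγε : -1 < β + γ + ε)
    (hu0 : 0 < u) (hu1 : u < 1) :
    tailProfile β γ u ≤ (1 / (β + γ + ε + 1) + 1 / (γ + 1)) * u ^ (-ε) := by
  have hint : ∀ p : ℝ, -1 < p → ∫ y in (1 - u) / 2..1 - u, (1 - u - y) ^ p ≤ 1 / (p + 1) :=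
    fun p hp => by
      rw [integral_sub_rpow_half hp]
      exact div_le_div_of_nonneg_right
        (Real.rpow_le_one (by linarith) (by linarith) (by linarith)) (by linarith)
  calc tailProfile β γ u ≤ ∫ y in (1 - u) / 2..1 - u,
        u ^ (-ε) * ((1 - u - y) ^ (β + γ + ε) + (1 - u - y) ^ γ) := by
        refine intervalIntegral.integral_mono_on_of_le_Ioo (by linarith)
          (intervalIntegrable_weight hγ hu0 (by linarith) le_rfl)
          (((intervalIntegrable_sub_rpow hβγε _ _ _).add
            (intervalIntegrable_sub_rpow hγ _ _ _)).const_mul _) fun y hy => ?_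
        have hz : 0 < 1 - u - y := by linarith [hy.2]
        have h1 : (1 - y) ^ (-ε) ≤ u ^ (-ε) :=
          Real.rpow_le_rpow_of_nonpos hu0 (by linarith) (by linarith)
        have h2 : (1 - y) ^ (β + ε) ≤ (1 - u - y) ^ (β + ε) + 1 := by
          simpa using Real.rpow_le_rpow_add_rpow_of_mem_Icc (β + ε) hz (b := 1)
            (by linarith) (by linarith [hy.1])
        -- split `(1 - y) ^ β = (1 - y) ^ (-ε) * (1 - y) ^ (β + ε)`
        rw [weight, show β = -ε + (β + ε) by ring, Real.rpow_add (by linarith),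
          show -ε + (β + ε) + γ + ε = (β + ε) + γ by ring, Real.rpow_add hz, mul_assoc,
          ← add_one_mul]
        refine mul_le_mul h1 (mul_le_mul_of_nonneg_right h2 (Real.rpow_nonneg hz.le _))
          (mul_nonneg (Real.rpow_nonneg (by linarith) _) (Real.rpow_nonneg hz.le _))
          (Real.rpow_nonneg hu0.le _)
    _ ≤ (1 / (β + γ + ε + 1) + 1 / (γ + 1)) * u ^ (-ε) := by
        rw [intervalIntegral.integral_const_mul, intervalIntegral.integral_add
          (intervalIntegrable_sub_rpow hβγε _ _ _) (intervalIntegrable_sub_rpow hγ _ _ _),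
          mul_comm]
        exact mul_le_mul_of_nonneg_right (add_le_add (hint _ hβγε) (hint _ hγ))
          (Real.rpow_nonneg hu0.le _)

theorem exists_tailProfile_le {ε : ℝ} (hγ : -1 < γ) (hε : 0 ≤ ε) (hβγε : -1 < β + γ + ε) :
    ∃ C, 0 ≤ C ∧
      ∀ u ∈ Ioo (0:ℝ) 1, tailProfile β γ u ≤ C * (1 - u) * (u ^ (-ε) + (1 - u) ^ γ) := by
  set K := 1 / (β + γ + ε + 1) + 1 / (γ + 1)
  set M := ((1 / 2) ^ β + 2) * (1 / 2) ^ (γ + 1) / (γ + 1)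
  have hK : 0 ≤ K := add_nonneg (one_div_nonneg.2 (by linarith)) (one_div_nonneg.2 (by linarith))
  have hM : 0 ≤ M := div_nonneg (by positivity) (by linarith)
  refine ⟨2 * K + M, by positivity, fun u ⟨hu0, hu1⟩ => ?_⟩
  have h1u : 0 < 1 - u := sub_pos.2 hu1
  have hA : 0 ≤ u ^ (-ε) := Real.rpow_nonneg hu0.le _
  have hB : 0 ≤ (1 - u) ^ γ := Real.rpow_nonneg h1u.le _
  rcases le_or_gt u (1 / 2) with hu | hu
  · calc tailProfile β γ u ≤ K * u ^ (-ε) := tailProfile_le_rpow_neg hγ hε hβγε hu0 hu1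
      _ ≤ 2 * K * (1 - u) * u ^ (-ε) := by nlinarith [mul_nonneg hK hA]
      _ ≤ _ := by gcongr <;> linarith
  · have hβ : u ^ β ≤ (1 / 2) ^ β + 1 := by
      simpa using Real.rpow_le_rpow_add_rpow_of_mem_Icc β (a := 1 / 2) (b := 1) (x := u)
        (by norm_num) hu.le hu1.le
    have hsplit : ((1 - u) / 2) ^ (γ + 1) = (1 / 2) ^ (γ + 1) * ((1 - u) * (1 - u) ^ γ) := by
      rw [div_eq_mul_one_div, Real.mul_rpow h1u.le (by norm_num), Real.rpow_add_one h1u.ne']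
      ring
    calc tailProfile β γ u ≤ (u ^ β + 1) * ((1 - u) / 2) ^ (γ + 1) / (γ + 1) :=
          tailProfile_le_rpow_one_sub hγ hu0 hu1
      _ ≤ M * (1 - u) * (1 - u) ^ γ := by
          rw [hsplit, mul_div_assoc, show M * (1 - u) * (1 - u) ^ γ =
            ((1 / 2) ^ β + 2) * ((1 / 2) ^ (γ + 1) * ((1 - u) * (1 - u) ^ γ) / (γ + 1)) by ring]
          exact mul_le_mul_of_nonneg_right (by linarith)
            (div_nonneg (by positivity) (by linarith))
      _ ≤ _ := by gcongr <;> linarith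

theorem scaledInner_eq_add (hγ : -1 < γ) (hT : 0 < T) (hu0 : 0 < u) (hu1 : u < 1) :
    scaledInner β γ θ T u =
      (∫ x in (0:ℝ)..T * (1 - u) / 2, kernel β γ θ T u x) +
        ∫ x in T * (1 - u) / 2..T * (1 - u), Real.exp (-θ * x) * weight β γ u (x / T) := by
  have hL : 0 ≤ T * (1 - u) := (mul_pos hT (sub_pos.2 hu1)).le
  exact (intervalIntegral.integral_add_adjacent_intervals
    (intervalIntegrable_kernel hγ hT hu0 (by linarith) (by linarith))
    (intervalIntegrable_kernel hγ hT hu0 (by linarith) le_rfl)).symm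

theorem tendsto_scaledInner (hγ : -1 < γ) (hθ : 0 < θ) (hu0 : 0 < u) (hu1 : u < 1) :
    Tendsto (fun T => scaledInner β γ θ T u) atTop (𝓝 ((1 - u) ^ γ / θ)) := by
  have htail : Tendsto (fun T => ∫ x in T * (1 - u) / 2..T * (1 - u),
      kernel β γ θ T u x) atTop (𝓝 0) := by
    have hdecay := (tendsto_rpow_mul_exp_neg_mul_atTop_nhds_zero 1 (θ * (1 - u) / 2)
      (by have := sub_pos.2 hu1; positivity)).mul_const (tailProfile β γ u)
    rw [zero_mul] at hdecay
    refine squeeze_zero' ((eventually_gt_atTop 0).mono fun T hT => ?_)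
      ((eventually_gt_atTop 0).mono fun T hT => ?_) hdecay
    · exact intervalIntegral.integral_nonneg (by nlinarith) fun x hx =>
        kernel_nonneg hT hu0.le hx.2
    · simpa [Real.rpow_one] using integral_kernel_tail_le hγ hθ.le hT hu0 hu1
  simpa using ((tendsto_integral_kernel_half hθ hu0 hu1).add htail).congr'
    ((eventually_gt_atTop 0).mono fun T hT => (scaledInner_eq_add hγ hT hu0 hu1).symm)

theorem scaledInner_nonneg (hT : 0 < T) (hu0 : 0 ≤ u) (hu1 : u ≤ 1) :
    0 ≤ scaledInner β γ θ T u :=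
  intervalIntegral.integral_nonneg (mul_nonneg hT.le (by linarith)) fun x hx =>
    kernel_nonneg hT hu0 hx.2

theorem exists_scaledInner_le {ε : ℝ} (hγ : -1 < γ) (hθ : 0 < θ) (hε : 0 ≤ ε)
    (hβγε : -1 < β + γ + ε) :
    ∃ C, ∀ T > 0, ∀ u ∈ Ioo (0:ℝ) 1, scaledInner β γ θ T u ≤ C * (u ^ (-ε) + (1 - u) ^ γ) := by
  obtain ⟨C, hC0, hC⟩ := exists_tailProfile_le (β := β) hγ hε hβγε
  set c := ((1 / 2 : ℝ) ^ β + 1) * ((1 / 2) ^ γ + 1)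
  refine ⟨c / θ + 2 * C / θ, fun T hT u ⟨hu0, hu1⟩ => ?_⟩
  have h1u : 0 < 1 - u := sub_pos.2 hu1
  have hA : 0 ≤ u ^ (-ε) := Real.rpow_nonneg hu0.le _
  have hB : 0 ≤ (1 - u) ^ γ := Real.rpow_nonneg h1u.le _
  -- cancels the factor `1 - u` in `exists_tailProfile_le`
  have hdecay : T * Real.exp (-(θ * (1 - u) / 2) * T) ≤ 2 / (θ * (1 - u)) := by
    simpa [one_div_div] using Real.mul_exp_neg_mul_le (by positivity : 0 < θ * (1 - u) / 2) T
  have hJ := hC u ⟨hu0, hu1⟩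
  have hJ0 : 0 ≤ tailProfile β γ u := intervalIntegral.integral_nonneg (by linarith)
    fun y hy => weight_nonneg hu0.le hy.2
  rw [scaledInner_eq_add hγ hT hu0 hu1]
  calc _ ≤ c * (1 - u) ^ γ / θ + 2 / (θ * (1 - u)) * (C * (1 - u) * (u ^ (-ε) + (1 - u) ^ γ)) :=
        add_le_add (integral_kernel_half_le hγ hθ hT hu0 hu1)
          ((integral_kernel_tail_le hγ hθ.le hT hu0 hu1).trans
            (mul_le_mul hdecay hJ hJ0 (by positivity)))
    _ = c / θ * (1 - u) ^ γ + 2 * C / θ * (u ^ (-ε) + (1 - u) ^ γ) := by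
        field_simp
    _ ≤ _ := by
        have : c / θ * (1 - u) ^ γ ≤ c / θ * (u ^ (-ε) + (1 - u) ^ γ) :=
          mul_le_mul_of_nonneg_left (by linarith) (by positivity)
        linarith

theorem stronglyMeasurable_scaledInner (T : ℝ) :
    StronglyMeasurable (scaledInner β γ θ T) :=
  StronglyMeasurable.intervalIntegral_prod_right
    (f := fun u => kernel β γ θ T u) (by unfold kernel weight; fun_prop) measurable_const
    (by fun_prop)

theorem exp_mul_integral_eq_scaledInner (hT : 0 < T) (hu0 : 0 ≤ u) (hu1 : u ≤ 1) :
    Real.exp (-(θ * T)) * ∫ t in T * u..T, Real.exp (θ * t) * t ^ β * (t - T * u) ^ γ =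
      T ^ (β + γ) * scaledInner β γ θ T u := by
  have hL : 0 ≤ T * (1 - u) := mul_nonneg hT.le (by linarith)
  have hsub := intervalIntegral.integral_comp_sub_left
    (fun t => Real.exp (θ * t) * t ^ β * (t - T * u) ^ γ) T (a := 0) (b := T * (1 - u))
  rw [show T - T * (1 - u) = T * u by ring, sub_zero] at hsub
  rw [← hsub, scaledInner, ← intervalIntegral.integral_const_mul,
    ← intervalIntegral.integral_const_mul]
  refine intervalIntegral.integral_congr fun x hx => ?_
  rw [uIcc_of_le hL] at hx
  have hTx : 0 ≤ T - x - T * u := by linarith [hx.2]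
  rw [kernel, weight, show 1 - x / T = (T - x) / T by field_simp,
    show 1 - u - x / T = (T - x - T * u) / T by field_simp; ring,
    Real.div_rpow (by nlinarith) hT.le, Real.div_rpow hTx hT.le, Real.rpow_add hT,
    show -θ * x = -(θ * T) + θ * (T - x) by ring, Real.exp_add]
  field_simp

theorem exp_mul_integral_eq_rpow_mul_integral_scaledInner (α : ℝ) (hT : 0 < T) :
    Real.exp (-(2 * θ * T)) * ∫ s in (0:ℝ)..T, s ^ (2 * α) *
      (∫ t in s..T, Real.exp (θ * t) * t ^ β * (t - s) ^ γ) ^ 2 =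
      T ^ (2 * α + 2 * β + 2 * γ + 1) *
        ∫ u in (0:ℝ)..1, u ^ (2 * α) * scaledInner β γ θ T u ^ 2 := by
  have hsub := intervalIntegral.smul_integral_comp_mul_left (a := 0) (b := 1)
    (fun s => s ^ (2 * α) * (∫ t in s..T, Real.exp (θ * t) * t ^ β * (t - s) ^ γ) ^ 2) T
  rw [mul_zero, mul_one, smul_eq_mul] at hsub
  rw [← hsub, ← mul_assoc, ← intervalIntegral.integral_const_mul,
    ← intervalIntegral.integral_const_mul]
  refine intervalIntegral.integral_congr fun u hu => ?_
  rw [uIcc_of_le zero_le_one] at hu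
  have hexp : Real.exp (-(2 * θ * T)) = Real.exp (-(θ * T)) ^ 2 := by
    rw [← Real.exp_nat_mul]; ring_nf
  have hpow : T ^ (2 * α + 2 * β + 2 * γ + 1) = T * T ^ (2 * α) * (T ^ (β + γ)) ^ 2 := by
    rw [show 2 * α + 2 * β + 2 * γ + 1 = 1 + 2 * α + (β + γ) * 2 by ring, Real.rpow_add hT,
      Real.rpow_add hT, Real.rpow_one, Real.rpow_mul hT.le (β + γ) 2, Real.rpow_two]
  have h := exp_mul_integral_eq_scaledInner (β := β) (γ := γ) (θ := θ) hT hu.1 hu.2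
  set I := ∫ t in T * u..T, Real.exp (θ * t) * t ^ β * (t - T * u) ^ γ
  rw [Real.mul_rpow hT.le hu.1, hpow, hexp]
  linear_combination (T * T ^ (2 * α) * u ^ (2 * α) *
    (Real.exp (-(θ * T)) * I + T ^ (β + γ) * scaledInner β γ θ T u)) * h

end

theorem tendsto_integral_rpow_mul_scaledInner_sq {α β γ θ : ℝ} (hα : -(1/2 : ℝ) < α)
    (hαβγ : -(3/2 : ℝ) < α + β + γ) (hγ : -(1/2 : ℝ) < γ) (hθ : 0 < θ) :
    Tendsto (fun T => ∫ u in (0:ℝ)..1, u ^ (2 * α) * scaledInner β γ θ T u ^ 2) atTop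
      (𝓝 (∫ u in (0:ℝ)..1, u ^ (2 * α) * ((1 - u) ^ γ / θ) ^ 2)) := by
  obtain ⟨ε, hε, hεα⟩ : ∃ ε, max 0 (-(β + γ + 1)) < ε ∧ ε < α + 1 / 2 :=
    exists_between (max_lt (by linarith) (by linarith))
  have hε0 : 0 ≤ ε := (le_max_left _ _).trans hε.le
  have hβγε : -1 < β + γ + ε := by linarith [le_max_right 0 (-(β + γ + 1))]
  obtain ⟨C, hC⟩ := exists_scaledInner_le (β := β) (θ := θ) (by linarith) hθ hε0 hβγε
  refine intervalIntegral.tendsto_integral_filter_of_dominated_convergence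
    (fun u => 2 * C ^ 2 * (u ^ (2 * α - 2 * ε) + u ^ (2 * α) * (1 - u) ^ (2 * γ)))
    (Eventually.of_forall fun T => (by fun_prop : Measurable fun u : ℝ => u ^ (2 * α))
      |>.aestronglyMeasurable.mul ((stronglyMeasurable_scaledInner T).aestronglyMeasurable.pow 2))
    ?_ (((intervalIntegral.intervalIntegrable_rpow' (by linarith)).add
      (intervalIntegrable_rpow_mul_one_sub_rpow (by linarith) (by linarith))).const_mul _) ?_
  · filter_upwards [eventually_gt_atTop 0] with T hT
    filter_upwards [Measure.ae_ne volume 1] with u hu1 hu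
    rw [uIoc_of_le zero_le_one] at hu
    have hu' : u ∈ Ioo (0:ℝ) 1 := ⟨hu.1, lt_of_le_of_ne hu.2 hu1⟩
    have hΦ0 := scaledInner_nonneg (β := β) (γ := γ) (θ := θ) hT hu.1.le hu.2
    have hΦ := hC T hT u hu'
    have hA := Real.rpow_nonneg hu.1.le (-ε)
    have hB := Real.rpow_nonneg (sub_nonneg.2 hu.2) γ
    rw [Real.norm_of_nonneg (mul_nonneg (Real.rpow_nonneg hu.1.le _) (sq_nonneg _))]
    calc u ^ (2 * α) * scaledInner β γ θ T u ^ 2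
        ≤ u ^ (2 * α) * (2 * C ^ 2 * ((u ^ (-ε)) ^ 2 + ((1 - u) ^ γ) ^ 2)) := by
          refine mul_le_mul_of_nonneg_left ?_ (Real.rpow_nonneg hu.1.le _)
          nlinarith [sq_nonneg (u ^ (-ε) - (1 - u) ^ γ), mul_le_mul hΦ hΦ hΦ0 (hΦ0.trans hΦ)]
      _ = 2 * C ^ 2 * (u ^ (2 * α) * (u ^ (-ε)) ^ 2 + u ^ (2 * α) * ((1 - u) ^ γ) ^ 2) := by
          ring
      _ = _ := by
          rw [Real.rpow_pow_two_eq_rpow_two_mul hu.1.le,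
            Real.rpow_pow_two_eq_rpow_two_mul (sub_nonneg.2 hu.2),
            ← Real.rpow_add hu'.1, show 2 * α + 2 * -ε = 2 * α - 2 * ε by ring]
  · filter_upwards [Measure.ae_ne volume 1] with u hu1 hu
    rw [uIoc_of_le zero_le_one] at hu
    exact ((tendsto_scaledInner (by linarith) hθ hu.1 (lt_of_le_of_ne hu.2 hu1)).pow 2).const_mul _

/-- Lemma 4.5, case `γ > -1/2`: asymptotics of
`E(e^{-θT} ∫₀ᵀ e^{θs} dX_s)²`. -/
theorem stmt_17 (α β γ θ : ℝ) (hα : -(1/2 : ℝ) < α)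
    (hαβγ : -(3/2 : ℝ) < α + β + γ) (hγ' : -(1/2 : ℝ) < γ) (hθ : 0 < θ)
    (G : ℝ → ℝ)
    (hG : ∀ T : ℝ, G T = Real.exp (-(2 * θ * T)) * ∫ s in (0:ℝ)..T, s ^ (2*α) *
      (∫ t in s..T, Real.exp (θ * t) * t ^ β * (t - s) ^ γ) ^ 2) :
    Tendsto (fun T : ℝ => G T / T ^ (2*α+2*β+2*γ+1)) atTop
      (nhds ((Real.Gamma (2*α+1) * Real.Gamma (2*γ+1) / Real.Gamma (2*α+2*γ+2))
        / θ ^ (2 : ℕ))) := by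
  have hval : ∫ u in (0:ℝ)..1, u ^ (2 * α) * ((1 - u) ^ γ / θ) ^ 2 =
      Real.Gamma (2*α+1) * Real.Gamma (2*γ+1) / Real.Gamma (2*α+2*γ+2) / θ ^ (2 : ℕ) := by
    have hbeta := integral_rpow_mul_one_sub_rpow (a := 2 * α + 1) (b := 2 * γ + 1)
      (by linarith) (by linarith)
    rw [add_sub_cancel_right, add_sub_cancel_right, add_add_add_comm, one_add_one_eq_two]
      at hbeta
    rw [← hbeta, ← intervalIntegral.integral_div]
    refine intervalIntegral.integral_congr fun u hu => ?_
    rw [uIcc_of_le zero_le_one] at hu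
    rw [div_pow, Real.rpow_pow_two_eq_rpow_two_mul (sub_nonneg.2 hu.2), mul_div_assoc]
  rw [← hval]
  refine (tendsto_integral_rpow_mul_scaledInner_sq hα hαβγ hγ' hθ).congr' ?_
  filter_upwards [eventually_gt_atTop 0] with T hT
  rw [hG, exp_mul_integral_eq_rpow_mul_integral_scaledInner α hT,
    mul_div_cancel_left₀ _ (Real.rpow_pos_of_pos hT _).ne']
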